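/- arXiv:1606.04723 — 2 statements merged into one kernel-verified Lean document; each statement's English description precedes it below -/
import Mathlib

section
/- Assume the pressure p : [0,∞) → ℝ is continuous on [0,∞), continuously differentiable on (0,∞), and satisfies p(0) = 0, p'(ρ) > 0 for every ρ > 0, and lim_{ρ→∞} p'(ρ)/ρ^{γ−1} = p_∞ > 0 for some constant γ > 3/2. Then for every compact interval [a,b] ⊂ (0,∞) there exists a constant c > 0 such that for every r ∈ [a,b] and every ρ > 0: if r/2 < ρ < 2r then H(ρ) − H'(r)(ρ − r) − H(r) ≥ c (ρ − r)², and otherwise H(ρ) − H'(r)(ρ − r) − H(r) ≥ c (1 + ρ^γ). -/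
/-!
Since `H'' = p'/ρ > 0`, the quantity to bound is the Bregman divergence
`D_r(ρ) = H(ρ) − H'(r)(ρ − r) − H(r)` of a convex function: it vanishes at `r`, grows as `ρ`
moves away from `r`, and shrinks as the base point moves from `r` towards `ρ`. Comparison with
a quadratic shows that `H'' ≥ m` between `r` and `ρ` forces `D_r(ρ) ≥ m (ρ − r)² / 2`. With `m`
the minimum of `p'/ρ` on `[a/2, 2b]` this is the bound for `r/2 < ρ < 2r`, and evaluated at
`r/2` or `2r` it bounds `D_r(ρ)` below by a positive constant for the remaining bounded `ρ`.
For large `ρ`, `p'(t) ≥ p_∞ t^(γ−1) / 2` gives `H'' ≳ ρ^(γ−2)` on `[ρ/2, ρ]`, hence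
`D_r(ρ) ≥ D_{ρ/2}(ρ) ≳ ρ^γ`.
-/

/-- The pressure potential `H(ρ) = ρ ∫₁^ρ p(z)/z² dz`. -/
noncomputable def Hpot (p : ℝ → ℝ) (ρ : ℝ) : ℝ :=
  ρ * ∫ z in (1:ℝ)..ρ, p z / z ^ 2

open Set Filter

/-- `f` plays the role of `F'`; passing it explicitly keeps `deriv`'s junk values out of the
estimates. -/
noncomputable def bregman (F f : ℝ → ℝ) (r ρ : ℝ) : ℝ := F ρ - f r * (ρ - r) - F r

section Bregman

variable {F f : ℝ → ℝ} {r ρ : ℝ}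

lemma bregman_add_bregman (F f : ℝ → ℝ) (r t ρ : ℝ) :
    bregman F f r t + bregman F f t ρ + (f t - f r) * (ρ - t) = bregman F f r ρ := by
  unfold bregman; ring

lemma bregman_sub (F₁ f₁ F₂ f₂ : ℝ → ℝ) (r ρ : ℝ) :
    bregman (F₂ - F₁) (f₂ - f₁) r ρ = bregman F₂ f₂ r ρ - bregman F₁ f₁ r ρ := by
  simp only [bregman, Pi.sub_apply]; ring

lemma bregman_nonneg (hF : ∀ s ∈ uIcc r ρ, HasDerivAt F (f s) s)
    (hf : MonotoneOn f (uIcc r ρ)) : 0 ≤ bregman F f r ρ := by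
  have hFc : ContinuousOn F (uIcc r ρ) := fun s hs => (hF s hs).continuousAt.continuousWithinAt
  rcases lt_trichotomy r ρ with h | rfl | h
  · rw [uIcc_of_le h.le] at hF hf hFc
    obtain ⟨ξ, hξ, hslope⟩ := exists_hasDerivAt_eq_slope F f h hFc
      fun s hs => hF s (Ioo_subset_Icc_self hs)
    have hfξ : f r ≤ f ξ := hf (left_mem_Icc.2 h.le) (Ioo_subset_Icc_self hξ) hξ.1.le
    rw [eq_div_iff (sub_pos.2 h).ne'] at hslope
    unfold bregman; nlinarith
  · simp [bregman]
  · rw [uIcc_of_ge h.le] at hF hf hFc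
    obtain ⟨ξ, hξ, hslope⟩ := exists_hasDerivAt_eq_slope F f h hFc
      fun s hs => hF s (Ioo_subset_Icc_self hs)
    have hfξ : f ξ ≤ f r := hf (Ioo_subset_Icc_self hξ) (right_mem_Icc.2 h.le) hξ.2.le
    rw [eq_div_iff (sub_pos.2 h).ne'] at hslope
    unfold bregman; nlinarith

lemma bregman_le_bregman {F₁ f₁ g₁ F₂ f₂ g₂ : ℝ → ℝ}
    (hF₁ : ∀ s ∈ uIcc r ρ, HasDerivAt F₁ (f₁ s) s) (hf₁ : ∀ s ∈ uIcc r ρ, HasDerivAt f₁ (g₁ s) s)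
    (hF₂ : ∀ s ∈ uIcc r ρ, HasDerivAt F₂ (f₂ s) s) (hf₂ : ∀ s ∈ uIcc r ρ, HasDerivAt f₂ (g₂ s) s)
    (hg : ∀ s ∈ uIcc r ρ, g₁ s ≤ g₂ s) : bregman F₁ f₁ r ρ ≤ bregman F₂ f₂ r ρ := by
  have hf : ∀ s ∈ uIcc r ρ, HasDerivAt (f₂ - f₁) (g₂ s - g₁ s) s :=
    fun s hs => (hf₂ s hs).sub (hf₁ s hs)
  have hmono : MonotoneOn (f₂ - f₁) (uIcc r ρ) :=
    monotoneOn_of_hasDerivWithinAt_nonneg (convex_uIcc r ρ)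
      (fun s hs => (hf s hs).continuousAt.continuousWithinAt)
      (fun s hs => (hf s (interior_subset hs)).hasDerivWithinAt)
      (fun s hs => sub_nonneg.2 (hg s (interior_subset hs)))
  have := bregman_nonneg (f := f₂ - f₁) (fun s hs => (hF₂ s hs).sub (hF₁ s hs)) hmono
  rw [bregman_sub] at this
  linarith

lemma sq_le_bregman {g : ℝ → ℝ} {m : ℝ} (hF : ∀ s ∈ uIcc r ρ, HasDerivAt F (f s) s)
    (hf : ∀ s ∈ uIcc r ρ, HasDerivAt f (g s) s) (hm : ∀ s ∈ uIcc r ρ, m ≤ g s) :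
    m / 2 * (ρ - r) ^ 2 ≤ bregman F f r ρ := by
  have hQ : ∀ s, HasDerivAt (fun s => m / 2 * s ^ 2) (m * s) s := fun s =>
    ((hasDerivAt_pow 2 s).const_mul (m / 2)).congr_deriv (by push_cast; ring)
  have hq : ∀ s, HasDerivAt (fun s => m * s) m s := fun s => by
    simpa using (hasDerivAt_id s).const_mul m
  have := bregman_le_bregman (fun s _ => hQ s) (fun s _ => hq s) hF hf hm
  convert this using 1
  simp only [bregman]; ring

end Bregman

section ConvexOnIoi

variable {F f g : ℝ → ℝ} {r t ρ : ℝ}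

lemma bregman_le_bregman_of_mem_uIcc (hF : ∀ s ∈ Ioi (0:ℝ), HasDerivAt F (f s) s)
    (hf : MonotoneOn f (Ioi 0)) (hr : 0 < r) (hρ : 0 < ρ) (ht : t ∈ uIcc r ρ) :
    bregman F f r t ≤ bregman F f r ρ := by
  have hsub : uIcc r ρ ⊆ Ioi 0 := ordConnected_Ioi.uIcc_subset hr hρ
  have ht0 : 0 < t := hsub ht
  have hsub' : uIcc t ρ ⊆ Ioi 0 := ordConnected_Ioi.uIcc_subset ht0 hρ
  have htρ : 0 ≤ bregman F f t ρ :=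
    bregman_nonneg (fun s hs => hF s (hsub' hs)) (hf.mono hsub')
  have hcross : 0 ≤ (f t - f r) * (ρ - t) := by
    rcases le_total r ρ with h | h
    · rw [uIcc_of_le h] at ht
      exact mul_nonneg (sub_nonneg.2 (hf hr ht0 ht.1)) (sub_nonneg.2 ht.2)
    · rw [uIcc_of_ge h] at ht
      exact mul_nonneg_of_nonpos_of_nonpos (sub_nonpos.2 (hf ht0 hr ht.2)) (sub_nonpos.2 ht.1)
  linarith [bregman_add_bregman F f r t ρ]

lemma bregman_le_bregman_of_le (hF : ∀ s ∈ Ioi (0:ℝ), HasDerivAt F (f s) s)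
    (hf : MonotoneOn f (Ioi 0)) (hr : 0 < r) (hrt : r ≤ t) (htρ : t ≤ ρ) :
    bregman F f t ρ ≤ bregman F f r ρ := by
  have hsub : uIcc r t ⊆ Ioi 0 := ordConnected_Ioi.uIcc_subset hr (hr.trans_le hrt)
  have hrt' : 0 ≤ bregman F f r t :=
    bregman_nonneg (fun s hs => hF s (hsub hs)) (hf.mono hsub)
  have hcross : 0 ≤ (f t - f r) * (ρ - t) :=
    mul_nonneg (sub_nonneg.2 (hf hr (hr.trans_le hrt) hrt)) (sub_nonneg.2 htρ)
  linarith [bregman_add_bregman F f r t ρ]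

lemma mul_sq_le_bregman_of_notMem_Ioo {m : ℝ} (hF : ∀ s ∈ Ioi (0:ℝ), HasDerivAt F (f s) s)
    (hf : ∀ s ∈ Ioi (0:ℝ), HasDerivAt f (g s) s) (hfm : MonotoneOn f (Ioi 0))
    (hm0 : 0 ≤ m) (hm : ∀ s ∈ Icc (r / 2) (2 * r), m ≤ g s) (hr : 0 < r) (hρ : 0 < ρ)
    (hfar : ρ ∉ Ioo (r / 2) (2 * r)) : m / 8 * r ^ 2 ≤ bregman F f r ρ := by
  obtain ⟨t, ht, hrt⟩ : ∃ t ∈ uIcc r ρ, (t = r / 2 ∨ t = 2 * r) := by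
    rcases le_or_gt ρ (r / 2) with h | h
    · exact ⟨r / 2, mem_uIcc.2 (Or.inr ⟨h, by linarith⟩), Or.inl rfl⟩
    · have : 2 * r ≤ ρ := not_lt.1 fun h' => hfar ⟨h, h'⟩
      exact ⟨2 * r, mem_uIcc.2 (Or.inl ⟨by linarith, this⟩), Or.inr rfl⟩
  have hsub : uIcc r t ⊆ Icc (r / 2) (2 * r) := by
    refine uIcc_subset_Icc ⟨by linarith, by linarith⟩ ?_
    rcases hrt with rfl | rfl <;> constructor <;> linarith
  have hpos : Icc (r / 2) (2 * r) ⊆ Ioi 0 := fun s hs => show 0 < s by linarith [hs.1]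
  have hquad := sq_le_bregman (fun s hs => hF s (hpos (hsub hs)))
    (fun s hs => hf s (hpos (hsub hs))) (fun s hs => hm s (hsub hs))
  have hsq : m / 8 * r ^ 2 ≤ m / 2 * (t - r) ^ 2 := by
    rcases hrt with rfl | rfl <;> nlinarith
  linarith [bregman_le_bregman_of_mem_uIcc hF hfm hr hρ ht]

lemma rpow_le_bregman {K γ T : ℝ} (hF : ∀ s ∈ Ioi (0:ℝ), HasDerivAt F (f s) s)
    (hf : ∀ s ∈ Ioi (0:ℝ), HasDerivAt f (g s) s) (hfm : MonotoneOn f (Ioi 0)) (hγ : 1 < γ)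
    (hK : 0 ≤ K) (hgrowth : ∀ t, T ≤ t → K * t ^ (γ - 1) / t ≤ g t)
    (hr : 0 < r) (hrρ : r ≤ ρ / 2) (hTρ : T ≤ ρ / 2) :
    K / (4 * 2 ^ γ) * ρ ^ γ ≤ bregman F f r ρ := by
  have hρ : 0 < ρ := by linarith
  have hsub : uIcc (ρ / 2) ρ ⊆ Icc (ρ / 2) ρ := (uIcc_of_le (by linarith)).subset
  have hpos : Icc (ρ / 2) ρ ⊆ Ioi 0 := fun s hs => show 0 < s by linarith [hs.1]
  have hm : ∀ s ∈ uIcc (ρ / 2) ρ, K * (ρ / 2) ^ (γ - 1) / ρ ≤ g s := by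
    intro s hs
    obtain ⟨hs₁, hs₂⟩ := hsub hs
    have : 0 < s := by linarith
    calc K * (ρ / 2) ^ (γ - 1) / ρ ≤ K * s ^ (γ - 1) / s := by gcongr
      _ ≤ g s := hgrowth s (hTρ.trans hs₁)
  have hquad := sq_le_bregman (fun s hs => hF s (hpos (hsub hs)))
    (fun s hs => hf s (hpos (hsub hs))) hm
  have hshift := bregman_le_bregman_of_le hF hfm hr hrρ (by linarith : ρ / 2 ≤ ρ)
  have hconst : K * (ρ / 2) ^ (γ - 1) / ρ / 2 * (ρ - ρ / 2) ^ 2 = K / (4 * 2 ^ γ) * ρ ^ γ := by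
    rw [Real.rpow_sub_one (by positivity), Real.div_rpow hρ.le (by norm_num)]
    field_simp
    ring
  linarith

lemma mul_one_add_rpow_le_bregman_of_notMem_Ioo {m K γ T : ℝ}
    (hF : ∀ s ∈ Ioi (0:ℝ), HasDerivAt F (f s) s) (hf : ∀ s ∈ Ioi (0:ℝ), HasDerivAt f (g s) s)
    (hfm : MonotoneOn f (Ioi 0)) (hγ : 1 < γ) (hK : 0 ≤ K)
    (hm0 : 0 ≤ m) (hm : ∀ s ∈ Icc (r / 2) (2 * r), m ≤ g s)
    (hgrowth : ∀ t, T ≤ t → K * t ^ (γ - 1) / t ≤ g t) (hT : 1 ≤ T) (hrT : r ≤ T)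
    (hr : 0 < r) (hρ : 0 < ρ) (hfar : ρ ∉ Ioo (r / 2) (2 * r)) :
    min (m * r ^ 2 / 8 / (1 + (2 * T) ^ γ)) (K / (8 * 2 ^ γ)) * (1 + ρ ^ γ)
      ≤ bregman F f r ρ := by
  rcases le_or_gt ρ (2 * T) with hρT | hρT
  · calc min (m * r ^ 2 / 8 / (1 + (2 * T) ^ γ)) (K / (8 * 2 ^ γ)) * (1 + ρ ^ γ)
        ≤ m * r ^ 2 / 8 / (1 + (2 * T) ^ γ) * (1 + (2 * T) ^ γ) := by
          gcongr
          exact min_le_left _ _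
      _ = m / 8 * r ^ 2 := by field_simp
      _ ≤ bregman F f r ρ := mul_sq_le_bregman_of_notMem_Ioo hF hf hfm hm0 hm hr hρ hfar
  · have h1 : 1 ≤ ρ ^ γ := Real.one_le_rpow (by linarith) (by linarith)
    calc min (m * r ^ 2 / 8 / (1 + (2 * T) ^ γ)) (K / (8 * 2 ^ γ)) * (1 + ρ ^ γ)
        ≤ K / (8 * 2 ^ γ) * (ρ ^ γ + ρ ^ γ) := by
          gcongr
          exact min_le_right _ _
      _ = K / (4 * 2 ^ γ) * ρ ^ γ := by field_simp; ring
      _ ≤ bregman F f r ρ :=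
        rpow_le_bregman hF hf hfm hγ hK hgrowth hr (by linarith) (by linarith)

end ConvexOnIoi

theorem exists_pos_bregman_lower_bound {F f g : ℝ → ℝ} {K γ a b : ℝ}
    (hF : ∀ s ∈ Ioi (0:ℝ), HasDerivAt F (f s) s) (hf : ∀ s ∈ Ioi (0:ℝ), HasDerivAt f (g s) s)
    (hg : ContinuousOn g (Ioi 0)) (hgpos : ∀ s ∈ Ioi (0:ℝ), 0 < g s) (hγ : 1 < γ) (hK : 0 < K)
    (hgrowth : ∀ᶠ t in atTop, K * t ^ (γ - 1) / t ≤ g t) (ha : 0 < a) :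
    ∃ c > 0, ∀ r ∈ Icc a b, ∀ ρ > 0,
      (ρ ∈ Ioo (r / 2) (2 * r) → c * (ρ - r) ^ 2 ≤ bregman F f r ρ) ∧
      (ρ ∉ Ioo (r / 2) (2 * r) → c * (1 + ρ ^ γ) ≤ bregman F f r ρ) := by
  have hfm : MonotoneOn f (Ioi 0) :=
    monotoneOn_of_hasDerivWithinAt_nonneg (convex_Ioi 0)
      (fun s hs => (hf s hs).continuousAt.continuousWithinAt)
      (fun s hs => (hf s (interior_subset hs)).hasDerivWithinAt)
      (fun s hs => (hgpos s (interior_subset hs)).le)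
  have hIcc : Icc (a / 2) (2 * b) ⊆ Ioi 0 := fun s hs => show 0 < s by linarith [hs.1]
  obtain ⟨m, hm0, hm⟩ := isCompact_Icc.exists_forall_le' (hg.mono hIcc)
    fun s hs => hgpos s (hIcc hs)
  obtain ⟨T₀, hT₀⟩ := eventually_atTop.1 hgrowth
  set T := max T₀ (max 1 b)
  have hT1 : 1 ≤ T := (le_max_left _ _).trans (le_max_right _ _)
  have hTb : b ≤ T := (le_max_right _ _).trans (le_max_right _ _)
  refine ⟨min (m / 2) (min (m * a ^ 2 / 8 / (1 + (2 * T) ^ γ)) (K / (8 * 2 ^ γ))),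
    by positivity, fun r hr ρ hρ => ?_⟩
  have hr0 : 0 < r := ha.trans_le hr.1
  have hmr : ∀ s ∈ Icc (r / 2) (2 * r), m ≤ g s :=
    fun s hs => hm s ⟨by linarith [hr.1, hs.1], by linarith [hr.2, hs.2]⟩
  refine ⟨fun hnear => ?_, fun hfar => ?_⟩
  · have hsub : uIcc r ρ ⊆ Icc (r / 2) (2 * r) :=
      uIcc_subset_Icc ⟨by linarith, by linarith⟩ (Ioo_subset_Icc_self hnear)
    have hpos : Icc (r / 2) (2 * r) ⊆ Ioi 0 := fun s hs => show 0 < s by linarith [hs.1]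
    refine le_trans ?_ (sq_le_bregman (fun s hs => hF s (hpos (hsub hs)))
      (fun s hs => hf s (hpos (hsub hs))) (fun s hs => hmr s (hsub hs)))
    gcongr
    exact min_le_left _ _
  · refine le_trans ?_ (mul_one_add_rpow_le_bregman_of_notMem_Ioo hF hf hfm hγ hK.le hm0.le hmr
      (fun t ht => hT₀ t ((le_max_left _ _).trans ht)) hT1 (hr.2.trans hTb) hr0 hρ hfar)
    have hmar : m * a ^ 2 / 8 / (1 + (2 * T) ^ γ) ≤ m * r ^ 2 / 8 / (1 + (2 * T) ^ γ) := by
      gcongr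
      exact hr.1
    exact mul_le_mul_of_nonneg_right ((min_le_right _ _).trans (min_le_min hmar le_rfl))
      (by positivity)

section Hpot

variable {p p' : ℝ → ℝ} {s : ℝ}

noncomputable def hpotDeriv (p : ℝ → ℝ) (s : ℝ) : ℝ := (∫ z in (1:ℝ)..s, p z / z ^ 2) + p s / s

lemma hasDerivAt_integral_div_sq (hp : ContinuousOn p (Ioi 0)) (hs : 0 < s) :
    HasDerivAt (fun u => ∫ z in (1:ℝ)..u, p z / z ^ 2) (p s / s ^ 2) s := by
  have hcont : ContinuousOn (fun z => p z / z ^ 2) (Ioi 0) :=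
    hp.div (continuousOn_pow 2) fun z hz => pow_ne_zero 2 (ne_of_gt hz)
  exact intervalIntegral.integral_hasDerivAt_right
    ((hcont.mono (ordConnected_Ioi.uIcc_subset one_pos hs)).intervalIntegrable)
    (hcont.stronglyMeasurableAtFilter isOpen_Ioi s hs) (hcont.continuousAt (Ioi_mem_nhds hs))

lemma hasDerivAt_Hpot (hp : ContinuousOn p (Ioi 0)) (hs : 0 < s) :
    HasDerivAt (Hpot p) (hpotDeriv p s) s :=
  ((hasDerivAt_id s).mul (hasDerivAt_integral_div_sq hp hs)).congr_deriv <| by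
    simp only [hpotDeriv, id]
    field_simp

lemma hasDerivAt_hpotDeriv (hp : ∀ s ∈ Ioi (0:ℝ), HasDerivAt p (p' s) s) (hs : 0 < s) :
    HasDerivAt (hpotDeriv p) (p' s / s) s := by
  have hcont : ContinuousOn p (Ioi 0) := fun s hs => (hp s hs).continuousAt.continuousWithinAt
  refine ((hasDerivAt_integral_div_sq hcont hs).add
    ((hp s hs).div (hasDerivAt_id s) hs.ne')).congr_deriv ?_
  simp only [id]
  field_simp
  ring

end Hpot

theorem stmt_6_general (p p' : ℝ → ℝ) (γ pinf : ℝ) (hγ : 3/2 < γ) (hpinf : 0 < pinf)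
    (hp : ∀ s ∈ Set.Ioi (0:ℝ), HasDerivAt p (p' s) s)
    (hp' : ContinuousOn p' (Set.Ioi 0))
    (hppos : ∀ s ∈ Set.Ioi (0:ℝ), 0 < p' s)
    (hlim : Filter.Tendsto (fun s : ℝ => p' s / s ^ (γ - 1)) Filter.atTop (nhds pinf))
    (a b : ℝ) (ha : 0 < a) :
    ∃ c > (0:ℝ), ∀ r ∈ Set.Icc a b, ∀ ρ > (0:ℝ),
      ((r/2 < ρ ∧ ρ < 2*r) →
        c * (ρ - r) ^ 2 ≤ Hpot p ρ - deriv (Hpot p) r * (ρ - r) - Hpot p r) ∧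
      (¬(r/2 < ρ ∧ ρ < 2*r) →
        c * (1 + ρ ^ γ) ≤ Hpot p ρ - deriv (Hpot p) r * (ρ - r) - Hpot p r) := by
  have hcont : ContinuousOn p (Ioi 0) := fun s hs => (hp s hs).continuousAt.continuousWithinAt
  have hgrowth : ∀ᶠ t in atTop, pinf / 2 * t ^ (γ - 1) / t ≤ p' t / t := by
    filter_upwards [hlim.eventually (eventually_ge_nhds (half_lt_self hpinf)),
      eventually_gt_atTop 0] with t ht ht0
    gcongr
    rwa [le_div_iff₀ (by positivity)] at ht
  obtain ⟨c, hc, hbound⟩ := exists_pos_bregman_lower_bound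
    (fun s hs => hasDerivAt_Hpot hcont hs) (fun s hs => hasDerivAt_hpotDeriv hp hs)
    (hp'.div continuousOn_id fun s hs => ne_of_gt hs) (fun s hs => div_pos (hppos s hs) hs)
    (by linarith) (half_pos hpinf) hgrowth ha
  refine ⟨c, hc, fun r hr ρ hρ => ?_⟩
  rw [(hasDerivAt_Hpot hcont (ha.trans_le hr.1)).deriv]
  exact hbound r hr ρ hρ

/-- Under the standing assumptions on the pressure (continuous on `[0,∞)`, `C¹` on
`(0,∞)`, `p(0)=0`, `p' > 0`, `p'(ρ)/ρ^{γ−1} → p_∞ > 0` with `γ > 3/2`), for every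
compact interval `[a,b] ⊂ (0,∞)` there is `c > 0` such that for `r ∈ [a,b]`, `ρ > 0`:
`H(ρ) − H'(r)(ρ−r) − H(r) ≥ c(ρ−r)²` if `r/2 < ρ < 2r`, and `≥ c(1+ρ^γ)` otherwise. -/
theorem stmt_6 (p p' : ℝ → ℝ) (γ pinf : ℝ) (hγ : 3/2 < γ) (hpinf : 0 < pinf)
    (hpc : ContinuousOn p (Set.Ici 0)) (hp0 : p 0 = 0)
    (hp : ∀ s ∈ Set.Ioi (0:ℝ), HasDerivAt p (p' s) s)
    (hp' : ContinuousOn p' (Set.Ioi 0))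
    (hppos : ∀ s ∈ Set.Ioi (0:ℝ), 0 < p' s)
    (hlim : Filter.Tendsto (fun s : ℝ => p' s / s ^ (γ - 1)) Filter.atTop (nhds pinf))
    (a b : ℝ) (ha : 0 < a) (hab : a ≤ b) :
    ∃ c > (0:ℝ), ∀ r ∈ Set.Icc a b, ∀ ρ > (0:ℝ),
      ((r/2 < ρ ∧ ρ < 2*r) →
        c * (ρ - r) ^ 2 ≤ Hpot p ρ - deriv (Hpot p) r * (ρ - r) - Hpot p r) ∧
      (¬(r/2 < ρ ∧ ρ < 2*r) →
        c * (1 + ρ ^ γ) ≤ Hpot p ρ - deriv (Hpot p) r * (ρ - r) - Hpot p r) :=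
  stmt_6_general p p' γ pinf hγ hpinf hp hp' hppos hlim a b ha
end

section
/- (Transport theorem) Let T > 0, let V : ℝ × ℝ³ → ℝ³ be continuously differentiable, and let X : ℝ × ℝ³ → ℝ³ be continuously differentiable and satisfy ∂_t X(t,x) = V(t, X(t,x)) for all (t,x) and X(0,x) = x, with X(t,·) injective for each t ∈ [0,T]. Let Ω₀ ⊂ ℝ³ be a bounded open set and set Ω_t = X(t, Ω₀). Then for every continuously differentiable, compactly supported f : ℝ × ℝ³ → ℝ, the function t ↦ ∫_{Ω_t} f(t,x) dx is differentiable on (0,T) with derivative d/dt ∫_{Ω_t} f(t,x) dx = ∫_{Ω_t} ( ∂_t f(t,x) + div_x( f(t,x) V(t,x) ) ) dx. -/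
/-!
Pull the integral back to the fixed domain: by the change of variables formula,
`∫_{Ω_s} f(s, ·) = ∫_{Ω₀} J(s, y) f(s, X(s, y)) dy` with `J = det ∂ₓX`. Differentiating the
integral representation `X(t, y) = y + ∫₀ᵗ V(s, X(s, y)) ds` in `y` shows that `∂ₓX` solves the
variational equation `∂ₜ∂ₓX = ∂ₓV(t, X) ∘ ∂ₓX` even though `X` is only `C¹`. Jacobi's formula for
the derivative of a determinant then gives Liouville's equation `∂ₜJ = (div V)(t, X) J`, so
`J = exp ∫ div V > 0` and the absolute value in the change of variables disappears. Differentiating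
under the integral sign over the bounded set `Ω₀` and pushing forward again produces the integrand
`∂ₜf + ∇f · V + f div V = ∂ₜf + div (f V)`.
-/

open MeasureTheory Topology

/-- Time partial derivative `∂_t f` of a function on `ℝ × ℝ³`. -/
noncomputable def pdt (f : ℝ × (Fin 3 → ℝ) → ℝ) (q : ℝ × (Fin 3 → ℝ)) : ℝ :=
  fderiv ℝ f q (1, 0)

/-- Spatial partial derivative `∂_{x_j} f` of a function on `ℝ × ℝ³`. -/
noncomputable def pdx (j : Fin 3) (f : ℝ × (Fin 3 → ℝ) → ℝ) (q : ℝ × (Fin 3 → ℝ)) : ℝ :=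
  fderiv ℝ f q (0, Pi.single j 1)

namespace Matrix

theorem hasDerivAt_det {𝕜 n : Type*} [NontriviallyNormedField 𝕜] [Fintype n] [DecidableEq n]
    {M : 𝕜 → Matrix n n 𝕜} {M' : Matrix n n 𝕜} {t : 𝕜}
    (hM : ∀ i j, HasDerivAt (fun s => M s i j) (M' i j) t) :
    HasDerivAt (fun s => (M s).det) (∑ i, ((M t).updateRow i (M' i)).det) t := by
  simp_rw [← det_transpose (updateRow _ _ _), ← det_transpose (M _), det_apply]
  rw [Finset.sum_comm]
  refine HasDerivAt.fun_sum fun σ _ => ?_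
  simp_rw [← Finset.smul_sum]
  refine HasDerivAt.const_smul _ (HasDerivAt.fun_finsetProd fun i _ => hM i (σ i)) |>.congr_deriv ?_
  congr 1
  refine Finset.sum_congr rfl fun i _ => ?_
  rw [← Finset.mul_prod_erase _ _ (Finset.mem_univ i), smul_eq_mul, mul_comm]
  simp only [transpose_apply, updateRow_self]
  congr 1
  exact Finset.prod_congr rfl fun j hj => by
    rw [updateRow_ne (Finset.ne_of_mem_erase hj)]

theorem hasDerivAt_det_of_hasDerivAt_eq_mul {𝕜 n : Type*} [NontriviallyNormedField 𝕜]
    [Fintype n] [DecidableEq n] {M : 𝕜 → Matrix n n 𝕜} {A : Matrix n n 𝕜} {t : 𝕜}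
    (hM : ∀ i j, HasDerivAt (fun s => M s i j) ((A * M t) i j) t) :
    HasDerivAt (fun s => (M s).det) (A.trace * (M t).det) t := by
  refine (hasDerivAt_det hM).congr_deriv ?_
  have hrow : ∀ i, (A * M t) i = ∑ k, A i k • M t k := fun i => by
    ext j; simp [mul_apply, Finset.sum_apply]
  simp_rw [hrow, det_updateRow_sum, smul_eq_mul, trace, diag, Finset.sum_mul]

end Matrix

namespace ContinuousLinearMap

variable {𝕜 E : Type*} [NontriviallyNormedField 𝕜] [CompleteSpace 𝕜]
  [NormedAddCommGroup E] [NormedSpace 𝕜 E] [FiniteDimensional 𝕜 E]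

theorem continuous_trace : Continuous fun A : E →L[𝕜] E => LinearMap.trace 𝕜 E A :=
  (LinearMap.trace 𝕜 E ∘ₗ coeLM 𝕜).continuous_of_finiteDimensional

theorem hasDerivAt_det {J : 𝕜 → E →L[𝕜] E} {A : E →L[𝕜] E} {t : 𝕜}
    (hJ : HasDerivAt J (A ∘L J t) t) :
    HasDerivAt (fun s => (J s).det) (LinearMap.trace 𝕜 E A * (J t).det) t := by
  let b := Module.finBasis 𝕜 E
  have hentry : ∀ i j, HasDerivAt (fun s => LinearMap.toMatrix b b (J s) i j)
      ((LinearMap.toMatrix b b A * LinearMap.toMatrix b b (J t)) i j) t := fun i j => by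
    have hcoord := (LinearMap.toContinuousLinearMap (b.coord i)).hasFDerivAt.comp_hasDerivAt t
      (hJ.clm_apply (hasDerivAt_const t (b j)))
    simp only [map_zero, add_zero] at hcoord
    simpa [LinearMap.toMatrix_apply, ← LinearMap.toMatrix_comp, Function.comp_def] using hcoord
  simpa only [LinearMap.det_toMatrix, ← LinearMap.trace_eq_matrix_trace] using
    Matrix.hasDerivAt_det_of_hasDerivAt_eq_mul hentry

end ContinuousLinearMap

theorem LinearMap.trace_pi_eq_sum {R ι : Type*} [CommRing R] [Fintype ι] [DecidableEq ι]
    (A : (ι → R) →ₗ[R] ι → R) :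
    LinearMap.trace R (ι → R) A = ∑ j, A (Pi.single j 1) j := by
  simp [LinearMap.trace_eq_matrix_trace R (Pi.basisFun R ι), Matrix.trace]

theorem ContinuousLinearMap.apply_pi_eq_sum {R ι : Type*} [CommRing R] [TopologicalSpace R]
    [Fintype ι] [DecidableEq ι] (L : (ι → R) →L[R] R) (v : ι → R) :
    L v = ∑ j, v j * L (Pi.single j 1) := by
  conv_lhs => rw [← (Pi.basisFun R ι).sum_repr v]
  simp

theorem eq_mul_exp_integral_of_hasDerivAt {D τ : ℝ → ℝ} (hτ : Continuous τ)
    (hD : ∀ s, HasDerivAt D (τ s * D s) s) (t : ℝ) :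
    D t = D 0 * Real.exp (∫ s in 0..t, τ s) := by
  have hconst : ∀ s, HasDerivAt (fun r => D r * Real.exp (-∫ u in 0..r, τ u)) 0 s := fun s => by
    refine ((hD s).mul ((hτ.integral_hasStrictDerivAt 0 s).hasDerivAt.neg.exp)).congr_deriv ?_
    ring
  have h := is_const_of_deriv_eq_zero (fun s => (hconst s).differentiableAt)
    (fun s => (hconst s).deriv) t 0
  simp only [intervalIntegral.integral_same, neg_zero, Real.exp_zero, mul_one] at h
  rw [← h, mul_assoc, ← Real.exp_add, neg_add_cancel, Real.exp_zero, mul_one]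

section SpatialFDeriv

variable {E F : Type*} [NormedAddCommGroup E] [NormedSpace ℝ E]
  [NormedAddCommGroup F] [NormedSpace ℝ F]

noncomputable def spatialFDeriv (g : ℝ × E → F) (p : ℝ × E) : E →L[ℝ] F :=
  (fderiv ℝ g p).comp (ContinuousLinearMap.inr ℝ ℝ E)

theorem hasFDerivAt_spatialFDeriv {g : ℝ × E → F} {t : ℝ} {x : E}
    (hg : DifferentiableAt ℝ g (t, x)) :
    HasFDerivAt (fun y => g (t, y)) (spatialFDeriv g (t, x)) x :=
  hg.hasFDerivAt.comp x ((hasFDerivAt_const t x).prodMk (hasFDerivAt_id x))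

theorem ContDiff.continuous_spatialFDeriv {g : ℝ × E → F} (hg : ContDiff ℝ 1 g) :
    Continuous (spatialFDeriv g) :=
  (hg.continuous_fderiv one_ne_zero).clm_comp continuous_const

theorem hasFDerivAt_intervalIntegral_of_contDiff [ProperSpace E] [CompleteSpace F]
    {g : ℝ × E → F} (hg : ContDiff ℝ 1 g) (a b : ℝ) (x₀ : E) :
    HasFDerivAt (fun x => ∫ s in a..b, g (s, x)) (∫ s in a..b, spatialFDeriv g (s, x₀)) x₀ := by
  have hsection : ∀ x, Continuous fun s => g (s, x) := fun x =>
    hg.continuous.comp (continuous_id.prodMk continuous_const)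
  obtain ⟨C, hC⟩ := (isCompact_uIcc.prod (isCompact_closedBall x₀ 1)).exists_bound_of_continuousOn
    hg.continuous_spatialFDeriv.continuousOn
  refine intervalIntegral.hasFDerivAt_integral_of_dominated_of_fderiv_le (bound := fun _ => C)
    (Metric.ball_mem_nhds x₀ one_pos)
    (.of_forall fun x => (hsection x).aestronglyMeasurable)
    ((hsection x₀).intervalIntegrable a b)
    (hg.continuous_spatialFDeriv.comp (continuous_id.prodMk continuous_const)).aestronglyMeasurable
    (.of_forall fun s hs x hx =>
      hC (s, x) ⟨Set.uIoc_subset_uIcc hs, Metric.ball_subset_closedBall hx⟩)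
    intervalIntegrable_const
    (.of_forall fun s _ x _ => hasFDerivAt_spatialFDeriv (hg.differentiable one_ne_zero (s, x)))

end SpatialFDeriv

section Flow

variable {E : Type*} [NormedAddCommGroup E] [NormedSpace ℝ E] {V X : ℝ × E → E}

theorem flow_eq_add_integral [CompleteSpace E] (hV : Continuous V)
    (hflow : ∀ t x, HasDerivAt (fun s => X (s, x)) (V (t, X (t, x))) t)
    (hX0 : ∀ x, X (0, x) = x) (t : ℝ) (x : E) :
    X (t, x) = x + ∫ s in 0..t, V (s, X (s, x)) := by
  have hcurve : Continuous fun s => X (s, x) :=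
    continuous_iff_continuousAt.2 fun s => (hflow s x).continuousAt
  rw [intervalIntegral.integral_eq_sub_of_hasDerivAt (fun s _ => hflow s x)
    ((hV.comp (continuous_id.prodMk hcurve)).intervalIntegrable 0 t), hX0]
  abel

variable [FiniteDimensional ℝ E]

theorem hasDerivAt_spatialFDeriv_flow (hV : ContDiff ℝ 1 V) (hX : ContDiff ℝ 1 X)
    (hflow : ∀ t x, HasDerivAt (fun s => X (s, x)) (V (t, X (t, x))) t)
    (hX0 : ∀ x, X (0, x) = x) (t : ℝ) (x : E) :
    HasDerivAt (fun s => spatialFDeriv X (s, x))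
      (spatialFDeriv V (t, X (t, x)) ∘L spatialFDeriv X (t, x)) t := by
  let W : ℝ × E → E := fun p => V (p.1, X p)
  have hW : ContDiff ℝ 1 W := hV.comp (contDiff_fst.prodMk hX)
  have hrep : ∀ s, spatialFDeriv X (s, x) =
      ContinuousLinearMap.id ℝ E + ∫ r in 0..s, spatialFDeriv W (r, x) := fun s => by
    refine (hasFDerivAt_spatialFDeriv (hX.differentiable one_ne_zero (s, x))).unique ?_
    rw [funext (flow_eq_add_integral hV.continuous hflow hX0 s)]
    exact (hasFDerivAt_id x).add (hasFDerivAt_intervalIntegral_of_contDiff hW 0 s x)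
  have hchain : spatialFDeriv W (t, x) = spatialFDeriv V (t, X (t, x)) ∘L spatialFDeriv X (t, x) :=
    (hasFDerivAt_spatialFDeriv (hW.differentiable one_ne_zero (t, x))).unique
      ((hasFDerivAt_spatialFDeriv (hV.differentiable one_ne_zero _)).comp x
        (hasFDerivAt_spatialFDeriv (hX.differentiable one_ne_zero (t, x))))
  rw [funext hrep, ← hchain]
  have hWx : Continuous fun r => spatialFDeriv W (r, x) :=
    hW.continuous_spatialFDeriv.comp (continuous_id.prodMk continuous_const)
  exact (hWx.integral_hasStrictDerivAt 0 t).hasDerivAt.const_add _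

theorem det_spatialFDeriv_flow_pos (hV : ContDiff ℝ 1 V) (hX : ContDiff ℝ 1 X)
    (hflow : ∀ t x, HasDerivAt (fun s => X (s, x)) (V (t, X (t, x))) t)
    (hX0 : ∀ x, X (0, x) = x) (t : ℝ) (x : E) :
    0 < (spatialFDeriv X (t, x)).det := by
  have hinit : spatialFDeriv X (0, x) = ContinuousLinearMap.id ℝ E :=
    (hasFDerivAt_spatialFDeriv (hX.differentiable one_ne_zero (0, x))).unique
      (by simp only [hX0]; exact hasFDerivAt_id x)
  have hτ : Continuous fun s => LinearMap.trace ℝ E (spatialFDeriv V (s, X (s, x))) :=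
    ContinuousLinearMap.continuous_trace.comp (hV.continuous_spatialFDeriv.comp
      (continuous_id.prodMk (hX.continuous.comp (continuous_id.prodMk continuous_const))))
  rw [eq_mul_exp_integral_of_hasDerivAt hτ
    (fun s => ContinuousLinearMap.hasDerivAt_det
      (hasDerivAt_spatialFDeriv_flow hV hX hflow hX0 s x)) t,
    hinit]
  simp only [ContinuousLinearMap.det, ContinuousLinearMap.coe_id, LinearMap.det_id, one_mul]
  exact Real.exp_pos _

end Flow

theorem hasDerivAt_setIntegral_of_continuous {E F : Type*} [MetricSpace E] [ProperSpace E]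
    [MeasurableSpace E] [OpensMeasurableSpace E] [NormedAddCommGroup F] [NormedSpace ℝ F]
    (μ : Measure E) [IsFiniteMeasureOnCompacts μ] {ρ ρ' : ℝ × E → F}
    (hρ : Continuous ρ) (hρ' : Continuous ρ')
    (hderiv : ∀ s y, HasDerivAt (fun r => ρ (r, y)) (ρ' (s, y)) s)
    {Ω : Set E} (hΩ : MeasurableSet Ω) (hbdd : Bornology.IsBounded Ω) (t : ℝ) :
    HasDerivAt (fun s => ∫ y in Ω, ρ (s, y) ∂μ) (∫ y in Ω, ρ' (t, y) ∂μ) t := by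
  have hsection : ∀ {h : ℝ × E → F}, Continuous h → ∀ s, Continuous fun y => h (s, y) :=
    fun hh s => hh.comp (continuous_const.prodMk continuous_id)
  obtain ⟨C, hC⟩ := ((isCompact_closedBall t 1).prod
    hbdd.isCompact_closure).exists_bound_of_continuousOn hρ'.continuousOn
  refine (hasDerivAt_integral_of_dominated_loc_of_deriv_le (bound := fun _ => C)
    (Metric.ball_mem_nhds t one_pos)
    (.of_forall fun s => (hsection hρ s).aestronglyMeasurable)
    (((hsection hρ t).continuousOn.integrableOn_compact hbdd.isCompact_closure).mono_set
      subset_closure)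
    (hsection hρ' t).aestronglyMeasurable
    ((ae_restrict_iff' hΩ).2 (.of_forall fun y hy s hs =>
      hC (s, y) ⟨Metric.ball_subset_closedBall hs, subset_closure hy⟩))
    (integrableOn_const hbdd.measure_lt_top.ne)
    (.of_forall fun y s _ => hderiv s y)).2

section Transport

variable {E : Type*} [NormedAddCommGroup E] [NormedSpace ℝ E] [FiniteDimensional ℝ E]
  [MeasurableSpace E] [BorelSpace E] (μ : Measure E) [μ.IsAddHaarMeasure] {V X : ℝ × E → E}

theorem setIntegral_image_flow (hV : ContDiff ℝ 1 V) (hX : ContDiff ℝ 1 X)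
    (hflow : ∀ t x, HasDerivAt (fun s => X (s, x)) (V (t, X (t, x))) t)
    (hX0 : ∀ x, X (0, x) = x) {Ω₀ : Set E} (hΩ₀ : MeasurableSet Ω₀) {t : ℝ}
    (hinj : Set.InjOn (fun x => X (t, x)) Ω₀) (g : E → ℝ) :
    ∫ x in (fun y => X (t, y)) '' Ω₀, g x ∂μ =
      ∫ y in Ω₀, (spatialFDeriv X (t, y)).det * g (X (t, y)) ∂μ := by
  rw [integral_image_eq_integral_abs_det_fderiv_smul μ hΩ₀
    (fun y _ => (hasFDerivAt_spatialFDeriv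
      (hX.differentiable one_ne_zero (t, y))).hasFDerivWithinAt) hinj]
  refine setIntegral_congr_fun hΩ₀ fun y _ => ?_
  rw [abs_of_pos (det_spatialFDeriv_flow_pos hV hX hflow hX0 t y), smul_eq_mul]

theorem hasDerivAt_setIntegral_image_flow (hV : ContDiff ℝ 1 V) (hX : ContDiff ℝ 1 X)
    (hflow : ∀ t x, HasDerivAt (fun s => X (s, x)) (V (t, X (t, x))) t)
    (hX0 : ∀ x, X (0, x) = x) {Ω₀ : Set E} (hΩ₀ : MeasurableSet Ω₀)
    (hbdd : Bornology.IsBounded Ω₀) {f : ℝ × E → ℝ} (hf : ContDiff ℝ 1 f) {t : ℝ}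
    (hinj : ∀ᶠ s in 𝓝 t, Set.InjOn (fun x => X (s, x)) Ω₀) :
    HasDerivAt (fun s => ∫ x in (fun y => X (s, y)) '' Ω₀, f (s, x) ∂μ)
      (∫ x in (fun y => X (t, y)) '' Ω₀,
        fderiv ℝ f (t, x) (1, V (t, x)) +
          f (t, x) * LinearMap.trace ℝ E (spatialFDeriv V (t, x)) ∂μ)
      t := by
  let G : ℝ × E → ℝ := fun p =>
    fderiv ℝ f p (1, V p) + f p * LinearMap.trace ℝ E (spatialFDeriv V p)
  have hG : Continuous G :=
    ((hf.continuous_fderiv one_ne_zero).clm_apply (continuous_const.prodMk hV.continuous)).add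
      (hf.continuous.mul (ContinuousLinearMap.continuous_trace.comp hV.continuous_spatialFDeriv))
  have hD : Continuous fun p => (spatialFDeriv X p).det :=
    ContinuousLinearMap.continuous_det.comp hX.continuous_spatialFDeriv
  have hXp : Continuous fun p : ℝ × E => (p.1, X p) := continuous_fst.prodMk hX.continuous
  have hderiv : ∀ s y, HasDerivAt (fun r => (spatialFDeriv X (r, y)).det * f (r, X (r, y)))
      ((spatialFDeriv X (s, y)).det * G (s, X (s, y))) s := fun s y => by
    have hfX : HasDerivAt (fun r => f (r, X (r, y)))
        (fderiv ℝ f (s, X (s, y)) (1, V (s, X (s, y)))) s :=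
      (hf.differentiable one_ne_zero _).hasFDerivAt.comp_hasDerivAt s
        ((hasDerivAt_id s).prodMk (hflow s y))
    refine ((ContinuousLinearMap.hasDerivAt_det
      (hasDerivAt_spatialFDeriv_flow hV hX hflow hX0 s y)).mul hfX).congr_deriv ?_
    ring
  rw [setIntegral_image_flow μ hV hX hflow hX0 hΩ₀ hinj.self_of_nhds]
  exact (hasDerivAt_setIntegral_of_continuous μ (hD.mul (hf.continuous.comp hXp))
    (hD.mul (hG.comp hXp)) hderiv hΩ₀ hbdd t).congr_of_eventuallyEq
    (hinj.mono fun s hs => setIntegral_image_flow μ hV hX hflow hX0 hΩ₀ hs _)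

end Transport

theorem pdt_add_sum_pdx_mul {f : ℝ × (Fin 3 → ℝ) → ℝ} {V : ℝ × (Fin 3 → ℝ) → Fin 3 → ℝ}
    {q : ℝ × (Fin 3 → ℝ)} (hf : DifferentiableAt ℝ f q) (hV : DifferentiableAt ℝ V q) :
    pdt f q + ∑ j, pdx j (fun q => f q * V q j) q =
      fderiv ℝ f q (1, V q) + f q * LinearMap.trace ℝ (Fin 3 → ℝ) (spatialFDeriv V q) := by
  have hpdx : ∀ j, pdx j (fun q => f q * V q j) q =
      V q j * spatialFDeriv f q (Pi.single j 1) + f q * spatialFDeriv V q (Pi.single j 1) j := by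
    intro j
    rw [pdx, (hf.hasFDerivAt.fun_mul (hasFDerivAt_pi'.1 hV.hasFDerivAt j)).fderiv]
    simp only [add_apply, smul_apply, ContinuousLinearMap.comp_apply,
      ContinuousLinearMap.proj_apply, ContinuousLinearMap.inr_apply, smul_eq_mul, spatialFDeriv]
    ring
  have hsum : ∑ j, V q j * spatialFDeriv f q (Pi.single j 1) = fderiv ℝ f q (0, V q) :=
    ((spatialFDeriv f q).apply_pi_eq_sum (V q)).symm
  have hsplit : fderiv ℝ f q (1, V q) = pdt f q + fderiv ℝ f q (0, V q) := by
    rw [pdt, ← map_add, Prod.mk_add_mk, add_zero, zero_add]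
  rw [hsplit, LinearMap.trace_pi_eq_sum, Finset.mul_sum]
  simp only [hpdx, Finset.sum_add_distrib, hsum, ContinuousLinearMap.coe_coe]
  ring

theorem stmt_10_general (T : ℝ)
    (V : ℝ × (Fin 3 → ℝ) → Fin 3 → ℝ) (hV : ContDiff ℝ 1 V)
    (X : ℝ × (Fin 3 → ℝ) → Fin 3 → ℝ) (hX : ContDiff ℝ 1 X)
    (hflow : ∀ t x, HasDerivAt (fun s => X (s, x)) (V (t, X (t, x))) t)
    (hX0 : ∀ x, X (0, x) = x)
    (hinj : ∀ t ∈ Set.Icc (0:ℝ) T, Function.Injective fun x => X (t, x))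
    (Ω₀ : Set (Fin 3 → ℝ)) (hΩ₀ : IsOpen Ω₀) (hbdd : Bornology.IsBounded Ω₀)
    (f : ℝ × (Fin 3 → ℝ) → ℝ) (hf : ContDiff ℝ 1 f) :
    ∀ t ∈ Set.Ioo (0:ℝ) T,
      HasDerivAt (fun s => ∫ x in (fun y => X (s, y)) '' Ω₀, f (s, x))
        (∫ x in (fun y => X (t, y)) '' Ω₀,
          pdt f (t, x) + ∑ j, pdx j (fun q => f q * V q j) (t, x)) t := by
  intro t ht
  have hinj_near : ∀ᶠ s in 𝓝 t, Set.InjOn (fun x => X (s, x)) Ω₀ :=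
    Filter.mem_of_superset (isOpen_Ioo.mem_nhds ht) fun s hs =>
      (hinj s (Set.Ioo_subset_Icc_self hs)).injOn
  convert hasDerivAt_setIntegral_image_flow volume hV hX hflow hX0 hΩ₀.measurableSet hbdd hf
    hinj_near using 2
  funext x
  exact pdt_add_sum_pdx_mul (hf.differentiable one_ne_zero _) (hV.differentiable one_ne_zero _)

/-- Transport theorem: if `Ω_t = X(t, Ω₀)` is transported by the flow `X` of a `C¹`
velocity field `V`, then for every `C¹` compactly supported `f`,
`d/dt ∫_{Ω_t} f dx = ∫_{Ω_t} (∂_t f + div_x (f V)) dx` for `t ∈ (0,T)`. -/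
theorem stmt_10 (T : ℝ) (hT : 0 < T)
    (V : ℝ × (Fin 3 → ℝ) → Fin 3 → ℝ) (hV : ContDiff ℝ 1 V)
    (X : ℝ × (Fin 3 → ℝ) → Fin 3 → ℝ) (hX : ContDiff ℝ 1 X)
    (hflow : ∀ t x, HasDerivAt (fun s => X (s, x)) (V (t, X (t, x))) t)
    (hX0 : ∀ x, X (0, x) = x)
    (hinj : ∀ t ∈ Set.Icc (0:ℝ) T, Function.Injective fun x => X (t, x))
    (Ω₀ : Set (Fin 3 → ℝ)) (hΩ₀ : IsOpen Ω₀) (hbdd : Bornology.IsBounded Ω₀)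
    (f : ℝ × (Fin 3 → ℝ) → ℝ) (hf : ContDiff ℝ 1 f) (hfc : HasCompactSupport f) :
    ∀ t ∈ Set.Ioo (0:ℝ) T,
      HasDerivAt (fun s => ∫ x in (fun y => X (s, y)) '' Ω₀, f (s, x))
        (∫ x in (fun y => X (t, y)) '' Ω₀,
          pdt f (t, x) + ∑ j, pdx j (fun q => f q * V q j) (t, x)) t :=
  stmt_10_general T V hV X hX hflow hX0 hinj Ω₀ hΩ₀ hbdd f hf
end
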